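/- arXiv:2003.08830 — 4 statements merged into one kernel-verified Lean document; each statement's English description precedes it below -/
import Mathlib

section
/- For every ω ≥ 0, H′(ω) = 0 if and only if Γ_p(ω) · Σ_{k=1}^m Δω_{zk}(ω) · Γ_z^k(ω) − Γ_z(ω) · Σ_{i=1}^n Δω_{pi}(ω) · Γ_p^i(ω) = 0; that is, the nonnegative zeros of H′ are exactly the nonnegative real roots of this polynomial in ω. -/
open Complex Real Filter Finset Set

/-!
On the line `Re s = σ₀` every factor `s - z` of `G` has `log ‖s - z‖ = ½ log γ(ω)`, so `H` is a
constant plus half a signed sum of `log γ`, and `σ₀ H'(ω) = Σₖ Δω_{zk}/γ_{zk} - Σᵢ Δω_{pi}/γ_{pi}`.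
Multiplying by the positive number `Γ_z Γ_p` clears the denominators and gives the polynomial.
-/

theorem Finset.prod_mul_sum_div {ι K : Type*} [Field K] [DecidableEq ι] (s : Finset ι)
    (f g : ι → K) (hg : ∀ i ∈ s, g i ≠ 0) :
    (∏ i ∈ s, g i) * ∑ i ∈ s, f i / g i = ∑ i ∈ s, f i * ∏ j ∈ s.erase i, g j := by
  rw [Finset.mul_sum]
  refine Finset.sum_congr rfl fun i hi => ?_
  rw [← Finset.mul_prod_erase s g hi, mul_comm (g i), mul_assoc, mul_div_cancel₀ _ (hg i hi),
    mul_comm]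

theorem Real.log_norm_mul_prod_div_prod {𝕜 ι κ : Type*} [NormedField 𝕜] {c : 𝕜}
    {s : Finset ι} {t : Finset κ} {u : ι → 𝕜} {v : κ → 𝕜} (hc : c ≠ 0)
    (hu : ∀ i ∈ s, u i ≠ 0) (hv : ∀ j ∈ t, v j ≠ 0) :
    Real.log ‖c * (∏ i ∈ s, u i) / ∏ j ∈ t, v j‖
      = Real.log ‖c‖ + ∑ i ∈ s, Real.log ‖u i‖ - ∑ j ∈ t, Real.log ‖v j‖ := by
  have hu' : ∀ i ∈ s, ‖u i‖ ≠ 0 := fun i hi => norm_ne_zero_iff.2 (hu i hi)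
  have hv' : ∀ j ∈ t, ‖v j‖ ≠ 0 := fun j hj => norm_ne_zero_iff.2 (hv j hj)
  rw [norm_div, norm_mul, norm_prod, norm_prod,
    Real.log_div (mul_ne_zero (norm_ne_zero_iff.2 hc) (prod_ne_zero_iff.2 hu'))
      (prod_ne_zero_iff.2 hv'),
    Real.log_mul (norm_ne_zero_iff.2 hc) (prod_ne_zero_iff.2 hu'),
    Real.log_prod hu', Real.log_prod hv']

theorem sq_sub_add_sq_sub_pos {σ₀ σ : ℝ} (h : σ ≠ σ₀) (ω ω₀ : ℝ) :
    0 < (σ₀ - σ) ^ 2 + (ω - ω₀) ^ 2 := by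
  have := sub_ne_zero.2 h.symm
  positivity

theorem Complex.log_norm_vertical_sub (σ₀ σ ω₀ ω : ℝ) :
    Real.log ‖((σ₀ : ℂ) + ω * I) - (σ + ω₀ * I)‖
      = Real.log ((σ₀ - σ) ^ 2 + (ω - ω₀) ^ 2) / 2 := by
  have hsplit :
      ((σ₀ : ℂ) + ω * I) - (σ + ω₀ * I) = ((σ₀ - σ : ℝ) : ℂ) + ((ω - ω₀ : ℝ) : ℂ) * I := by
    push_cast
    ring
  rw [hsplit, norm_add_mul_I, Real.log_sqrt (by positivity)]

theorem Complex.hasDerivAt_log_norm_vertical_sub {σ₀ σ : ℝ} (h : σ ≠ σ₀) (ω₀ ω : ℝ) :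
    HasDerivAt (fun x : ℝ => Real.log ‖((σ₀ : ℂ) + x * I) - (σ + ω₀ * I)‖)
      ((ω - ω₀) / ((σ₀ - σ) ^ 2 + (ω - ω₀) ^ 2)) ω := by
  simp only [log_norm_vertical_sub]
  have hγ : HasDerivAt (fun x : ℝ => (σ₀ - σ) ^ 2 + (x - ω₀) ^ 2) (2 * (ω - ω₀)) ω := by
    simpa using (((hasDerivAt_id ω).sub_const ω₀).pow 2).const_add ((σ₀ - σ) ^ 2)
  refine ((hγ.log (sq_sub_add_sq_sub_pos h ω ω₀).ne').div_const 2).congr_deriv ?_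
  ring

theorem hasDerivAt_log_norm_rational_vertical {ι κ : Type*} {s : Finset ι} {t : Finset κ}
    {c : ℂ} (hc : c ≠ 0) {σ₀ : ℝ} {σz ωz : ι → ℝ} {σp ωp : κ → ℝ}
    (hz : ∀ k ∈ s, σz k ≠ σ₀) (hp : ∀ i ∈ t, σp i ≠ σ₀) (ω : ℝ) :
    HasDerivAt (fun x : ℝ => Real.log ‖c * (∏ k ∈ s, ((σ₀ : ℂ) + x * I - (σz k + ωz k * I)))
        / ∏ i ∈ t, ((σ₀ : ℂ) + x * I - (σp i + ωp i * I))‖)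
      (∑ k ∈ s, (ω - ωz k) / ((σ₀ - σz k) ^ 2 + (ω - ωz k) ^ 2)
        - ∑ i ∈ t, (ω - ωp i) / ((σ₀ - σp i) ^ 2 + (ω - ωp i) ^ 2)) ω := by
  have hne : ∀ {σ ω₀ : ℝ}, σ ≠ σ₀ → ∀ x : ℝ, (σ₀ : ℂ) + x * I - (σ + ω₀ * I) ≠ 0 := by
    intro σ ω₀ h x hx
    have hre : σ₀ = σ := by simpa [sub_eq_zero] using congrArg Complex.re hx
    exact h hre.symm
  have hsplit : (fun x : ℝ => Real.log ‖c * (∏ k ∈ s, ((σ₀ : ℂ) + x * I - (σz k + ωz k * I)))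
        / ∏ i ∈ t, ((σ₀ : ℂ) + x * I - (σp i + ωp i * I))‖)
      = fun x : ℝ => Real.log ‖c‖ + ∑ k ∈ s, Real.log ‖(σ₀ : ℂ) + x * I - (σz k + ωz k * I)‖
          - ∑ i ∈ t, Real.log ‖(σ₀ : ℂ) + x * I - (σp i + ωp i * I)‖ :=
    funext fun x => Real.log_norm_mul_prod_div_prod hc (fun k hk => hne (hz k hk) x)
      (fun i hi => hne (hp i hi) x)
  rw [hsplit, ← zero_add (∑ k ∈ s, _)]
  exact ((hasDerivAt_const ω _).add
    (HasDerivAt.fun_sum fun k hk => hasDerivAt_log_norm_vertical_sub (hz k hk) (ωz k) ω)).sub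
    (HasDerivAt.fun_sum fun i hi => hasDerivAt_log_norm_vertical_sub (hp i hi) (ωp i) ω)

theorem stmt_3
    (m n : ℕ) (kG : ℝ) (hkG : kG ≠ 0)
    (σz ωz : Fin m → ℝ) (σp ωp : Fin n → ℝ)
    (σ0 : ℝ) (hσ0 : σ0 < 0)
    (hz : ∀ k, σz k ≠ σ0) (hp : ∀ i, σp i ≠ σ0)
    (G : ℂ → ℂ)
    (hG : ∀ s : ℂ, G s =
      (kG : ℂ) * (∏ k : Fin m, (s - ((σz k : ℂ) + (ωz k : ℂ) * Complex.I))) /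
        (∏ i : Fin n, (s - ((σp i : ℂ) + (ωp i : ℂ) * Complex.I))))
    (γz : Fin m → ℝ → ℝ)
    (hγz : ∀ (k : Fin m) (ω : ℝ), γz k ω = (σ0 - σz k) ^ 2 + (ω - ωz k) ^ 2)
    (γp : Fin n → ℝ → ℝ)
    (hγp : ∀ (i : Fin n) (ω : ℝ), γp i ω = (σ0 - σp i) ^ 2 + (ω - ωp i) ^ 2)
    (H : ℝ → ℝ)
    (hH : ∀ ω : ℝ, H ω = Real.log ‖G ((σ0 : ℂ) + (ω : ℂ) * Complex.I)‖ / σ0)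
    : ∀ ω : ℝ, 0 ≤ ω →
      (deriv H ω = 0 ↔
        (∏ i : Fin n, γp i ω) *
            (∑ k : Fin m, (ω - ωz k) * ∏ k₁ ∈ Finset.univ.erase k, γz k₁ ω)
          - (∏ k : Fin m, γz k ω) *
            (∑ i : Fin n, (ω - ωp i) * ∏ i₁ ∈ Finset.univ.erase i, γp i₁ ω) = 0) := by
  intro ω _
  simp only [hγz, hγp]
  have hH' : H = fun x : ℝ => Real.log ‖(kG : ℂ) * (∏ k, ((σ0 : ℂ) + x * I - (σz k + ωz k * I)))
      / ∏ i, ((σ0 : ℂ) + x * I - (σp i + ωp i * I))‖ / σ0 :=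
    funext fun x => by rw [hH, hG]
  have hγz_ne : ∀ k ∈ Finset.univ, (σ0 - σz k) ^ 2 + (ω - ωz k) ^ 2 ≠ 0 :=
    fun k _ => (sq_sub_add_sq_sub_pos (hz k) ω (ωz k)).ne'
  have hγp_ne : ∀ i ∈ Finset.univ, (σ0 - σp i) ^ 2 + (ω - ωp i) ^ 2 ≠ 0 :=
    fun i _ => (sq_sub_add_sq_sub_pos (hp i) ω (ωp i)).ne'
  rw [hH', ((hasDerivAt_log_norm_rational_vertical (ofReal_ne_zero.2 hkG)
      (fun k _ => hz k) (fun i _ => hp i) ω).div_const σ0).deriv,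
    div_eq_zero_iff, or_iff_left hσ0.ne,
    ← prod_mul_sum_div _ _ _ hγz_ne, ← prod_mul_sum_div _ _ _ hγp_ne,
    show ∀ a b x y : ℝ, b * (a * x) - a * (b * y) = a * b * (x - y) from fun _ _ _ _ => by ring,
    mul_eq_zero,
    or_iff_right (mul_ne_zero (prod_ne_zero_iff.2 hγz_ne) (prod_ne_zero_iff.2 hγp_ne))]
end

section
/- For every real ω, the logarithmic derivative of G at s = σ₀ + iω satisfies G′(σ₀ + iω)/G(σ₀ + iω) = ( φ′(ω) + H(ω) + ω·H′(ω) ) − i·σ₀·H′(ω); equivalently, Σ_{k=1}^m 1/(σ₀ + iω − z_k) − Σ_{i=1}^n 1/(σ₀ + iω − p_i) equals this complex number. -/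
/-!
`G'/G = ∑ 1/(s - z_k) - ∑ 1/(s - p_i)` is the logarithmic derivative of the factorisation of `G`.
Along the vertical line `s = σ₀ + iω` the chain rule gives
`d/dω log ‖G s‖ = Re (i G'(s)/G(s)) = -Im (G'/G)`, i.e. `σ₀ H' = -Im (G'/G)`, while each
`arctan ((ω - ω_z)/(σ₀ - σ_z))` differentiates to `Re (1/(s - z))`, so `Θ' = Re (G'/G)`.
Finally `φ = Θ - ωH` gives `φ' + H + ωH' = Θ'`, and the claim is `G'/G = Re (G'/G) + i Im (G'/G)`.
-/

open Complex Real Filter Finset Set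

section RationalFunction

variable {𝕜 ι κ : Type*} [NontriviallyNormedField 𝕜]

theorem logDeriv_sub_const (a x : 𝕜) : logDeriv (fun y => y - a) x = 1 / (x - a) := by
  simp [logDeriv_apply]

variable (s : Finset ι) (t : Finset κ) {c : 𝕜}
  {z : ι → 𝕜} {p : κ → 𝕜} {x : 𝕜}

theorem const_mul_prod_sub_div_prod_sub_ne_zero (hc : c ≠ 0) (hz : ∀ k ∈ s, x ≠ z k)
    (hp : ∀ i ∈ t, x ≠ p i) : c * (∏ k ∈ s, (x - z k)) / ∏ i ∈ t, (x - p i) ≠ 0 :=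
  div_ne_zero (mul_ne_zero hc (prod_ne_zero_iff.mpr fun k hk => sub_ne_zero.mpr (hz k hk)))
    (prod_ne_zero_iff.mpr fun i hi => sub_ne_zero.mpr (hp i hi))

theorem differentiableAt_const_mul_prod_sub_div_prod_sub (hp : ∀ i ∈ t, x ≠ p i) :
    DifferentiableAt 𝕜 (fun y => c * (∏ k ∈ s, (y - z k)) / ∏ i ∈ t, (y - p i)) x :=
  (by fun_prop : DifferentiableAt 𝕜 _ x).div (by fun_prop)
    (prod_ne_zero_iff.mpr fun i hi => sub_ne_zero.mpr (hp i hi))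

theorem logDeriv_const_mul_prod_sub_div_prod_sub (hc : c ≠ 0) (hz : ∀ k ∈ s, x ≠ z k)
    (hp : ∀ i ∈ t, x ≠ p i) :
    logDeriv (fun y => c * (∏ k ∈ s, (y - z k)) / ∏ i ∈ t, (y - p i)) x =
      ∑ k ∈ s, 1 / (x - z k) - ∑ i ∈ t, 1 / (x - p i) := by
  have hzx : ∀ k ∈ s, x - z k ≠ 0 := fun k hk => sub_ne_zero.mpr (hz k hk)
  have hpx : ∀ i ∈ t, x - p i ≠ 0 := fun i hi => sub_ne_zero.mpr (hp i hi)
  rw [logDeriv_div (f := fun y => c * ∏ k ∈ s, (y - z k)) x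
      (mul_ne_zero hc (prod_ne_zero_iff.mpr hzx)) (prod_ne_zero_iff.mpr hpx)
      (by fun_prop) (by fun_prop), logDeriv_const_mul x c hc,
    logDeriv_prod hzx (fun _ _ => by fun_prop), logDeriv_prod hpx (fun _ _ => by fun_prop)]
  simp only [logDeriv_sub_const]

end RationalFunction

theorem HasDerivAt.log_norm {f : ℝ → ℂ} {f' : ℂ} {x : ℝ} (hf : HasDerivAt f f' x)
    (hx : f x ≠ 0) : HasDerivAt (fun t => Real.log ‖f t‖) (f' / f x).re x := by
  have hlog : (fun t => Real.log ‖f t‖) = fun t => Real.log (‖f t‖ ^ 2) / 2 := by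
    funext t
    rw [Real.log_pow]
    push_cast
    ring
  rw [hlog]
  refine ((hf.norm_sq.log (by positivity)).div_const 2).congr_deriv ?_
  rw [Complex.inner, ← Complex.normSq_eq_norm_sq, Complex.div_re]
  simp only [mul_re, conj_re, conj_im]
  ring

theorem hasDerivAt_log_norm_vertical {G : ℂ → ℂ} {σ₀ ω : ℝ}
    (hG : DifferentiableAt ℂ G (σ₀ + ω * I)) (hG₀ : G (σ₀ + ω * I) ≠ 0) :
    HasDerivAt (fun t : ℝ => Real.log ‖G (σ₀ + t * I)‖)
      (-(deriv G (σ₀ + ω * I) / G (σ₀ + ω * I)).im) ω := by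
  have hline : HasDerivAt (fun t : ℝ => (σ₀ : ℂ) + t * I) I ω := by
    simpa using ((hasDerivAt_id ω).ofReal_comp.mul_const I).const_add (σ₀ : ℂ)
  refine ((hG.hasDerivAt.comp ω hline).log_norm hG₀).congr_deriv ?_
  rw [Function.comp_apply, mul_div_right_comm, mul_I_re]

theorem hasDerivAt_arctan_sub_div {a b : ℝ} (ha : a ≠ 0) (ω : ℝ) :
    HasDerivAt (fun ω => Real.arctan ((ω - b) / a)) (a / (a ^ 2 + (ω - b) ^ 2)) ω := by
  have hlin : HasDerivAt (fun ω : ℝ => (ω - b) / a) (1 / a) ω := by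
    simpa using ((hasDerivAt_id ω).sub_const b).div_const a
  refine ((Real.hasDerivAt_arctan ((ω - b) / a)).comp ω hlin).congr_deriv ?_
  field_simp

theorem re_one_div_sub (σ₀ ω a b : ℝ) :
    (1 / ((σ₀ : ℂ) + ω * I - (a + b * I))).re = (σ₀ - a) / ((σ₀ - a) ^ 2 + (ω - b) ^ 2) := by
  simp only [one_div, inv_re, normSq_apply, sub_re, add_re, sub_im, add_im, ofReal_re, ofReal_im,
    mul_re, mul_im, I_re, I_im, mul_zero, mul_one, sub_self, add_zero, zero_add]
  ring

theorem hasDerivAt_sum_arctan_sub_div_sub {ι : Type*} (s : Finset ι) {σ₀ : ℝ} {a : ι → ℝ}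
    (ha : ∀ k ∈ s, a k ≠ σ₀) (b : ι → ℝ) (ω : ℝ) :
    HasDerivAt (fun ω => ∑ k ∈ s, Real.arctan ((ω - b k) / (σ₀ - a k)))
      (∑ k ∈ s, 1 / ((σ₀ : ℂ) + ω * I - (a k + b k * I))).re ω := by
  rw [re_sum]
  refine HasDerivAt.fun_sum fun k hk => ?_
  rw [re_one_div_sub]
  exact hasDerivAt_arctan_sub_div (sub_ne_zero.mpr (ha k hk).symm) ω

theorem ofReal_deriv_add_sub_I_mul_eq {Θ H : ℝ → ℝ} {L : ℂ} {σ₀ ω : ℝ} (hσ₀ : σ₀ ≠ 0)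
    (hΘ : HasDerivAt Θ L.re ω) (hH : HasDerivAt H (-L.im / σ₀) ω) :
    ((deriv (fun t => Θ t - t * H t) ω + H ω + ω * deriv H ω : ℝ) : ℂ)
      - I * σ₀ * (deriv H ω : ℝ) = L := by
  have hφ : HasDerivAt (fun t => Θ t - t * H t) (L.re - (1 * H ω + ω * (-L.im / σ₀))) ω :=
    hΘ.sub ((hasDerivAt_id' ω).mul hH)
  have hre : deriv (fun t => Θ t - t * H t) ω + H ω + ω * deriv H ω = L.re := by
    rw [hφ.deriv, hH.deriv]
    ring
  have him : σ₀ * deriv H ω = -L.im := by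
    rw [hH.deriv]
    field_simp
  rw [hre, mul_assoc, ← ofReal_mul, him]
  conv_rhs => rw [← re_add_im L]
  push_cast
  ring

theorem stmt_9_general
    (m n : ℕ) (kG : ℝ) (hkG : kG ≠ 0)
    (σz ωz : Fin m → ℝ) (σp ωp : Fin n → ℝ)
    (σ0 : ℝ) (hσ0 : σ0 < 0)
    (hz : ∀ k, σz k ≠ σ0) (hp : ∀ i, σp i ≠ σ0)
    (G : ℂ → ℂ)
    (hG : ∀ s : ℂ, G s =
      (kG : ℂ) * (∏ k : Fin m, (s - ((σz k : ℂ) + (ωz k : ℂ) * Complex.I))) /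
        (∏ i : Fin n, (s - ((σp i : ℂ) + (ωp i : ℂ) * Complex.I))))
    (H : ℝ → ℝ)
    (hH : ∀ ω : ℝ, H ω = Real.log ‖G ((σ0 : ℂ) + (ω : ℂ) * Complex.I)‖ / σ0)
    (Θ : ℝ → ℝ)
    (hΘ : ∀ ω : ℝ, Θ ω =
      (∑ k : Fin m, Real.arctan ((ω - ωz k) / (σ0 - σz k)))
        - ∑ i : Fin n, Real.arctan ((ω - ωp i) / (σ0 - σp i)))
    (φ : ℝ → ℝ) (hφ : ∀ ω : ℝ, φ ω = Θ ω - ω * H ω)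
    : ∀ ω : ℝ,
      deriv G ((σ0 : ℂ) + (ω : ℂ) * Complex.I) / G ((σ0 : ℂ) + (ω : ℂ) * Complex.I) =
        (((deriv φ ω + H ω + ω * deriv H ω : ℝ) : ℂ)
          - Complex.I * (σ0 : ℂ) * ((deriv H ω : ℝ) : ℂ)) ∧
      (∑ k : Fin m, 1 / ((σ0 : ℂ) + (ω : ℂ) * Complex.I - ((σz k : ℂ) + (ωz k : ℂ) * Complex.I)))
        - (∑ i : Fin n, 1 / ((σ0 : ℂ) + (ω : ℂ) * Complex.I - ((σp i : ℂ) + (ωp i : ℂ) * Complex.I))) =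
        (((deriv φ ω + H ω + ω * deriv H ω : ℝ) : ℂ)
          - Complex.I * (σ0 : ℂ) * ((deriv H ω : ℝ) : ℂ)) := by
  intro ω
  set s : ℂ := σ0 + ω * I
  set L := (∑ k : Fin m, 1 / (s - (σz k + ωz k * I))) - ∑ i : Fin n, 1 / (s - (σp i + ωp i * I))
  have hsz : ∀ k ∈ Finset.univ, s ≠ σz k + ωz k * I := fun k _ h =>
    hz k (by simpa [s] using (congrArg re h).symm)
  have hsp : ∀ i ∈ Finset.univ, s ≠ σp i + ωp i * I := fun i _ h =>
    hp i (by simpa [s] using (congrArg re h).symm)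
  have hkG' : (kG : ℂ) ≠ 0 := ofReal_ne_zero.mpr hkG
  have hGeq : G = fun t => (kG : ℂ) * (∏ k : Fin m, (t - (σz k + ωz k * I))) /
      ∏ i : Fin n, (t - (σp i + ωp i * I)) := funext hG
  have hlogDeriv : deriv G s / G s = L := by
    rw [← logDeriv_apply, hGeq]
    exact logDeriv_const_mul_prod_sub_div_prod_sub _ _ hkG' hsz hsp
  have hH' : HasDerivAt H (-L.im / σ0) ω := by
    rw [funext hH, ← hlogDeriv]
    refine (hasDerivAt_log_norm_vertical ?_ ?_).div_const σ0
    · rw [hGeq]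
      exact differentiableAt_const_mul_prod_sub_div_prod_sub _ _ hsp
    · rw [hG]
      exact const_mul_prod_sub_div_prod_sub_ne_zero _ _ hkG' hsz hsp
  have hΘ' : HasDerivAt Θ L.re ω := by
    rw [funext hΘ, sub_re]
    exact (hasDerivAt_sum_arctan_sub_div_sub _ (fun k _ => hz k) ωz ω).sub
      (hasDerivAt_sum_arctan_sub_div_sub _ (fun i _ => hp i) ωp ω)
  have hrhs := ofReal_deriv_add_sub_I_mul_eq hσ0.ne hΘ' hH'
  rw [← funext hφ] at hrhs
  exact ⟨hlogDeriv.trans hrhs.symm, hrhs.symm⟩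

theorem stmt_9
    (m n : ℕ) (kG : ℝ) (hkG : kG ≠ 0)
    (σz ωz : Fin m → ℝ) (σp ωp : Fin n → ℝ)
    (σ0 : ℝ) (hσ0 : σ0 < 0)
    (hz : ∀ k, σz k ≠ σ0) (hp : ∀ i, σp i ≠ σ0)
    (G : ℂ → ℂ)
    (hG : ∀ s : ℂ, G s =
      (kG : ℂ) * (∏ k : Fin m, (s - ((σz k : ℂ) + (ωz k : ℂ) * Complex.I))) /
        (∏ i : Fin n, (s - ((σp i : ℂ) + (ωp i : ℂ) * Complex.I))))
    (γz : Fin m → ℝ → ℝ)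
    (hγz : ∀ (k : Fin m) (ω : ℝ), γz k ω = (σ0 - σz k) ^ 2 + (ω - ωz k) ^ 2)
    (γp : Fin n → ℝ → ℝ)
    (hγp : ∀ (i : Fin n) (ω : ℝ), γp i ω = (σ0 - σp i) ^ 2 + (ω - ωp i) ^ 2)
    (H : ℝ → ℝ)
    (hH : ∀ ω : ℝ, H ω = Real.log ‖G ((σ0 : ℂ) + (ω : ℂ) * Complex.I)‖ / σ0)
    (Θ : ℝ → ℝ)
    (hΘ : ∀ ω : ℝ, Θ ω =
      (∑ k : Fin m, Real.arctan ((ω - ωz k) / (σ0 - σz k)))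
        - ∑ i : Fin n, Real.arctan ((ω - ωp i) / (σ0 - σp i)))
    (φ : ℝ → ℝ) (hφ : ∀ ω : ℝ, φ ω = Θ ω - ω * H ω)
    : ∀ ω : ℝ,
      deriv G ((σ0 : ℂ) + (ω : ℂ) * Complex.I) / G ((σ0 : ℂ) + (ω : ℂ) * Complex.I) =
        (((deriv φ ω + H ω + ω * deriv H ω : ℝ) : ℂ)
          - Complex.I * (σ0 : ℂ) * ((deriv H ω : ℝ) : ℂ)) ∧
      (∑ k : Fin m, 1 / ((σ0 : ℂ) + (ω : ℂ) * Complex.I - ((σz k : ℂ) + (ωz k : ℂ) * Complex.I)))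
        - (∑ i : Fin n, 1 / ((σ0 : ℂ) + (ω : ℂ) * Complex.I - ((σp i : ℂ) + (ωp i : ℂ) * Complex.I))) =
        (((deriv φ ω + H ω + ω * deriv H ω : ℝ) : ℂ)
          - Complex.I * (σ0 : ℂ) * ((deriv H ω : ℝ) : ℂ)) :=
  stmt_9_general m n kG hkG σz ωz σp ωp σ0 hσ0 hz hp G hG H hH Θ hΘ φ hφ
end

section
/- If s₀ = σ₀ + iω₀ (ω₀ real) and h₀ is a real number with 1 + G(s₀)·e^{−h₀·s₀} = 0, then G′(s₀)/G(s₀) − h₀ = φ′(ω₀) + ω₀·H′(ω₀) − i·σ₀·H′(ω₀). -/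
open Complex Real Filter Finset Set

theorem hasDerivAt_log_norm_comp_vertical_line {f : ℂ → ℂ} {c ω : ℝ}
    (hf : DifferentiableAt ℂ f (c + ω * I)) (hf0 : f (c + ω * I) ≠ 0) :
    HasDerivAt (fun t : ℝ => Real.log ‖f (c + t * I)‖) (-(logDeriv f (c + ω * I)).im) ω := by
  have hline : HasDerivAt (fun t : ℝ => (c : ℂ) + t * I) I ω := by
    simpa using ((hasDerivAt_id (ω : ℂ)).mul_const I).const_add (c : ℂ) |>.comp_ofReal
  refine ((hf.hasDerivAt.comp ω hline).log_norm hf0).congr_deriv ?_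
  rw [logDeriv_apply, Function.comp_apply, mul_div_right_comm, Complex.mul_re]
  simp

theorem hasDerivAt_arctan_sub_div_sub (x y c ω : ℝ) (hc : c ≠ x) :
    HasDerivAt (fun t => Real.arctan ((t - y) / (c - x)))
      (((c : ℂ) + ω * I - (x + y * I))⁻¹).re ω := by
  have hcx : c - x ≠ 0 := sub_ne_zero.mpr hc
  have hlin : HasDerivAt (fun t => (t - y) / (c - x)) (1 / (c - x)) ω :=
    ((hasDerivAt_id ω).sub_const y).div_const (c - x)
  convert hlin.arctan using 1
  rw [Complex.inv_re, Complex.normSq_apply]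
  simp only [sub_re, add_re, ofReal_re, mul_re, I_re, mul_zero, ofReal_im, I_im, mul_one, sub_self,
    add_zero, sub_im, add_im, mul_im, zero_add, one_div]
  have hγ : (c - x) ^ 2 + (ω - y) ^ 2 ≠ 0 := by positivity
  field_simp

theorem differentiableAt_const_mul_prod_div_prod {ι κ : Type*} (s : Finset ι) (t : Finset κ)
    (c : ℂ) (z : ι → ℂ) (p : κ → ℂ) {x : ℂ} (hp : ∀ i ∈ t, x ≠ p i) :
    DifferentiableAt ℂ (fun w => c * (∏ k ∈ s, (w - z k)) / ∏ i ∈ t, (w - p i)) x :=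
  ((differentiableAt_const c).mul (by fun_prop)).div (by fun_prop)
    (prod_ne_zero_iff.mpr fun i hi => sub_ne_zero.mpr (hp i hi))

theorem logDeriv_const_mul_prod_div_prod {ι κ : Type*} (s : Finset ι) (t : Finset κ)
    (c : ℂ) (z : ι → ℂ) (p : κ → ℂ) (x : ℂ) (hc : c ≠ 0) (hz : ∀ k ∈ s, x ≠ z k)
    (hp : ∀ i ∈ t, x ≠ p i) :
    logDeriv (fun w => c * (∏ k ∈ s, (w - z k)) / ∏ i ∈ t, (w - p i)) x =
      ∑ k ∈ s, (x - z k)⁻¹ - ∑ i ∈ t, (x - p i)⁻¹ := by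
  have hlin : ∀ a : ℂ, DifferentiableAt ℂ (fun w => w - a) x := fun a =>
    (differentiable_id.sub_const a).differentiableAt
  have hlogDeriv_sub : ∀ a : ℂ, logDeriv (fun w => w - a) x = (x - a)⁻¹ := fun a => by
    rw [logDeriv_apply, deriv_sub_const, deriv_id'', one_div]
  rw [logDeriv_div (f := fun w => c * ∏ k ∈ s, (w - z k)) (g := fun w => ∏ i ∈ t, (w - p i)) x
      (mul_ne_zero hc (prod_ne_zero_iff.mpr fun k hk => sub_ne_zero.mpr (hz k hk)))
      (prod_ne_zero_iff.mpr fun i hi => sub_ne_zero.mpr (hp i hi))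
      ((differentiableAt_const c).mul (DifferentiableAt.fun_finsetProd fun k _ => hlin _))
      (DifferentiableAt.fun_finsetProd fun i _ => hlin _),
    logDeriv_const_mul x c hc,
    logDeriv_prod (fun k hk => sub_ne_zero.mpr (hz k hk)) (fun k _ => hlin _),
    logDeriv_prod (fun i hi => sub_ne_zero.mpr (hp i hi)) (fun i _ => hlin _)]
  simp only [hlogDeriv_sub]

theorem log_norm_eq_of_one_add_mul_exp_eq_zero {h : ℝ} {a s : ℂ}
    (ha : 1 + a * Complex.exp (-(h : ℂ) * s) = 0) : Real.log ‖a‖ = h * s.re := by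
  have hnorm : ‖a‖ * Real.exp (-(h * s.re)) = 1 := by
    have := congrArg (‖·‖) (eq_neg_of_add_eq_zero_right ha)
    simpa [Complex.norm_exp] using this
  rw [← Real.log_exp (h * s.re), ← mul_one (Real.exp _), ← hnorm, mul_comm ‖a‖,
    ← mul_assoc, ← Real.exp_add, add_neg_cancel, Real.exp_zero, one_mul]

theorem stmt_10_general
    (m n : ℕ) (kG : ℝ) (hkG : kG ≠ 0)
    (σz ωz : Fin m → ℝ) (σp ωp : Fin n → ℝ)
    (σ0 : ℝ) (hσ0 : σ0 < 0)
    (hz : ∀ k, σz k ≠ σ0) (hp : ∀ i, σp i ≠ σ0)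
    (G : ℂ → ℂ)
    (hG : ∀ s : ℂ, G s =
      (kG : ℂ) * (∏ k : Fin m, (s - ((σz k : ℂ) + (ωz k : ℂ) * Complex.I))) /
        (∏ i : Fin n, (s - ((σp i : ℂ) + (ωp i : ℂ) * Complex.I))))
    (H : ℝ → ℝ)
    (hH : ∀ ω : ℝ, H ω = Real.log ‖G ((σ0 : ℂ) + (ω : ℂ) * Complex.I)‖ / σ0)
    (Θ : ℝ → ℝ)
    (hΘ : ∀ ω : ℝ, Θ ω =
      (∑ k : Fin m, Real.arctan ((ω - ωz k) / (σ0 - σz k)))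
        - ∑ i : Fin n, Real.arctan ((ω - ωp i) / (σ0 - σp i)))
    (φ : ℝ → ℝ) (hφ : ∀ ω : ℝ, φ ω = Θ ω - ω * H ω)
    (ω0 h0 : ℝ) (s0 : ℂ) (hs0 : s0 = (σ0 : ℂ) + (ω0 : ℂ) * Complex.I)
    (hchar : 1 + G s0 * Complex.exp (-(h0 : ℂ) * s0) = 0)
    : deriv G s0 / G s0 - (h0 : ℂ) =
      ((deriv φ ω0 + ω0 * deriv H ω0 : ℝ) : ℂ)
        - Complex.I * (σ0 : ℂ) * ((deriv H ω0 : ℝ) : ℂ) := by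
  subst hs0
  have hGeq := funext hG
  set L := logDeriv G (σ0 + ω0 * I) with hL
  have hpole : ∀ (x y : ℝ), σ0 ≠ x → (σ0 : ℂ) + ω0 * I ≠ x + y * I := fun x y h heq =>
    h (by simpa using congrArg Complex.re heq)
  have hLsum : L = ∑ k, ((σ0 : ℂ) + ω0 * I - (σz k + ωz k * I))⁻¹
      - ∑ i, ((σ0 : ℂ) + ω0 * I - (σp i + ωp i * I))⁻¹ := by
    rw [hL, hGeq]
    exact logDeriv_const_mul_prod_div_prod _ _ _ _ _ _ (ofReal_ne_zero.mpr hkG)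
      (fun k _ => hpole _ _ (hz k).symm) (fun i _ => hpole _ _ (hp i).symm)
  have hHω0 : H ω0 = h0 := by
    rw [hH, log_norm_eq_of_one_add_mul_exp_eq_zero hchar]
    simpa using mul_div_cancel_right₀ h0 hσ0.ne
  have hHD : HasDerivAt H (-L.im / σ0) ω0 := by
    have hG0 : G (σ0 + ω0 * I) ≠ 0 := fun h => by simp [h] at hchar
    have hGd : DifferentiableAt ℂ G (σ0 + ω0 * I) := by
      rw [hGeq]
      exact differentiableAt_const_mul_prod_div_prod _ _ _ _ _ fun i _ => hpole _ _ (hp i).symm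
    rw [funext hH]
    exact (hasDerivAt_log_norm_comp_vertical_line hGd hG0).div_const σ0
  have hΘD : HasDerivAt Θ L.re ω0 := by
    rw [funext hΘ, hLsum, sub_re, re_sum, re_sum]
    exact (HasDerivAt.fun_sum fun k _ => hasDerivAt_arctan_sub_div_sub _ _ _ _ (hz k).symm).sub
      (HasDerivAt.fun_sum fun i _ => hasDerivAt_arctan_sub_div_sub _ _ _ _ (hp i).symm)
  have hφD : HasDerivAt φ (L.re - (1 * H ω0 + ω0 * (-L.im / σ0))) ω0 := by
    rw [funext hφ]
    exact hΘD.sub ((hasDerivAt_id ω0).mul hHD)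
  rw [← logDeriv_apply, ← hL, hφD.deriv, hHD.deriv, hHω0]
  have hσ0C : (σ0 : ℂ) ≠ 0 := ofReal_ne_zero.mpr hσ0.ne
  conv_lhs => rw [← re_add_im L]
  push_cast
  field_simp
  ring

theorem stmt_10
    (m n : ℕ) (kG : ℝ) (hkG : kG ≠ 0)
    (σz ωz : Fin m → ℝ) (σp ωp : Fin n → ℝ)
    (σ0 : ℝ) (hσ0 : σ0 < 0)
    (hz : ∀ k, σz k ≠ σ0) (hp : ∀ i, σp i ≠ σ0)
    (G : ℂ → ℂ)
    (hG : ∀ s : ℂ, G s =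
      (kG : ℂ) * (∏ k : Fin m, (s - ((σz k : ℂ) + (ωz k : ℂ) * Complex.I))) /
        (∏ i : Fin n, (s - ((σp i : ℂ) + (ωp i : ℂ) * Complex.I))))
    (γz : Fin m → ℝ → ℝ)
    (hγz : ∀ (k : Fin m) (ω : ℝ), γz k ω = (σ0 - σz k) ^ 2 + (ω - ωz k) ^ 2)
    (γp : Fin n → ℝ → ℝ)
    (hγp : ∀ (i : Fin n) (ω : ℝ), γp i ω = (σ0 - σp i) ^ 2 + (ω - ωp i) ^ 2)
    (H : ℝ → ℝ)
    (hH : ∀ ω : ℝ, H ω = Real.log ‖G ((σ0 : ℂ) + (ω : ℂ) * Complex.I)‖ / σ0)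
    (Θ : ℝ → ℝ)
    (hΘ : ∀ ω : ℝ, Θ ω =
      (∑ k : Fin m, Real.arctan ((ω - ωz k) / (σ0 - σz k)))
        - ∑ i : Fin n, Real.arctan ((ω - ωp i) / (σ0 - σp i)))
    (φ : ℝ → ℝ) (hφ : ∀ ω : ℝ, φ ω = Θ ω - ω * H ω)
    (ω0 h0 : ℝ) (s0 : ℂ) (hs0 : s0 = (σ0 : ℂ) + (ω0 : ℂ) * Complex.I)
    (hchar : 1 + G s0 * Complex.exp (-(h0 : ℂ) * s0) = 0)
    : deriv G s0 / G s0 - (h0 : ℂ) =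
      ((deriv φ ω0 + ω0 * deriv H ω0 : ℝ) : ℂ)
        - Complex.I * (σ0 : ℂ) * ((deriv H ω0 : ℝ) : ℂ) :=
  stmt_10_general m n kG hkG σz ωz σp ωp σ0 hσ0 hz hp G hG H hH Θ hΘ φ hφ ω0 h0 s0 hs0 hchar
end

section
/- (Continuous phase factorization.) For every real ω, G(σ₀ + iω) · |G(σ₀)| · e^{i·Θ(0)} = G(σ₀) · |G(σ₀ + iω)| · e^{i·Θ(ω)}; that is, Θ(ω) is a continuous choice of the argument of G along the line s = σ₀ + iω up to the constant offset determined at ω = 0. -/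
open Complex Real Filter Finset Set

/-!
Off the imaginary axis a complex number `z` equals `sign (re z) · ‖z‖ · exp (i · arctan (im z / re z))`:
`arctan (im z / re z)` is an argument of `z` or of `-z`, whichever lies in the right half-plane.
On the line `Re s = σ₀`, which meets no zero and no pole of `G`, each factor `s - z_k` or `s - p_i`
keeps the sign of its real part, so multiplying these polar forms gives
`G (σ₀ + iω) = c · ‖G (σ₀ + iω)‖ · exp (i Θ(ω))` with a constant `c`. Comparing `ω` with `0`
eliminates `c`.
-/

theorem Real.sign_mul_abs (r : ℝ) : Real.sign r * |r| = r := by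
  rcases lt_trichotomy r 0 with h | rfl | h
  · rw [Real.sign_of_neg h, abs_of_neg h, neg_one_mul, neg_neg]
  · rw [abs_zero, mul_zero]
  · rw [Real.sign_of_pos h, abs_of_pos h, one_mul]

namespace Complex

theorem arg_eq_arctan_of_re_pos {z : ℂ} (h : 0 < z.re) : arg z = Real.arctan (z.im / z.re) := by
  have hlt := abs_lt.mp (abs_arg_lt_pi_div_two_iff.mpr (Or.inl h))
  rw [← tan_arg, Real.arctan_tan hlt.1 hlt.2]

theorem eq_sign_re_mul_norm_mul_exp_arctan {z : ℂ} (h : z.re ≠ 0) :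
    z = Real.sign z.re * ‖z‖ * exp (Real.arctan (z.im / z.re) * I) := by
  rcases h.lt_or_gt with hneg | hpos
  · have harg := arg_eq_arctan_of_re_pos (z := -z) (by simpa using hneg)
    rw [neg_im, neg_re, neg_div_neg_eq] at harg
    rw [Real.sign_of_neg hneg, ← harg, ← norm_neg z, ofReal_neg, ofReal_one, mul_assoc,
      norm_mul_exp_arg_mul_I, neg_one_mul, neg_neg]
  · rw [Real.sign_of_pos hpos, ← arg_eq_arctan_of_re_pos hpos, ofReal_one, one_mul,
      norm_mul_exp_arg_mul_I]

end Complex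

section PolarForm

variable {ι : Type*}

theorem prod_eq_prod_mul_norm_mul_exp_sum (s : Finset ι) {w c : ι → ℂ} {θ : ι → ℝ}
    (h : ∀ i ∈ s, w i = c i * ‖w i‖ * exp (θ i * I)) :
    ∏ i ∈ s, w i = (∏ i ∈ s, c i) * ‖∏ i ∈ s, w i‖ * exp ((∑ i ∈ s, θ i : ℝ) * I) := by
  calc ∏ i ∈ s, w i = ∏ i ∈ s, c i * ‖w i‖ * exp (θ i * I) := prod_congr rfl h
    _ = _ := by
      rw [prod_mul_distrib, prod_mul_distrib, norm_prod, ofReal_prod, ofReal_sum, sum_mul,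
        Complex.exp_sum]

theorem ofReal_mul_div_eq_mul_norm_mul_exp_sub (k : ℝ) {a b ca cb : ℂ} {α β : ℝ}
    (ha : a = ca * ‖a‖ * exp (α * I)) (hb : b = cb * ‖b‖ * exp (β * I)) :
    k * a / b = (Real.sign k * ca / cb) * ‖k * a / b‖ * exp ((α - β : ℝ) * I) := by
  have hk : (k : ℂ) = Real.sign k * |k| := by exact_mod_cast (Real.sign_mul_abs k).symm
  rw [norm_div, norm_mul, norm_real, Real.norm_eq_abs, ofReal_sub, sub_mul, Complex.exp_sub]
  conv_lhs => rw [ha, hb, hk]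
  push_cast
  ring

theorem prod_sub_eq_prod_sign_mul_norm_mul_exp (s : Finset ι) (z : ι → ℂ) {σ : ℝ}
    (hz : ∀ i ∈ s, (z i).re ≠ σ) (ω : ℝ) :
    ∏ i ∈ s, (σ + ω * I - z i) = (∏ i ∈ s, (Real.sign (σ - (z i).re) : ℂ)) *
      ‖∏ i ∈ s, (σ + ω * I - z i)‖ *
        exp ((∑ i ∈ s, Real.arctan ((ω - (z i).im) / (σ - (z i).re)) : ℝ) * I) := by
  refine prod_eq_prod_mul_norm_mul_exp_sum s fun i hi => ?_
  have hre : (σ + ω * I - z i).re = σ - (z i).re := by simp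
  have him : (σ + ω * I - z i).im = ω - (z i).im := by simp
  rw [← hre, ← him]
  refine eq_sign_re_mul_norm_mul_exp_arctan ?_
  rw [hre, sub_ne_zero]
  exact (hz i hi).symm

end PolarForm

theorem stmt_15_general
    (m n : ℕ) (kG : ℝ)
    (σz ωz : Fin m → ℝ) (σp ωp : Fin n → ℝ)
    (σ0 : ℝ)
    (hz : ∀ k, σz k ≠ σ0) (hp : ∀ i, σp i ≠ σ0)
    (G : ℂ → ℂ)
    (hG : ∀ s : ℂ, G s =
      (kG : ℂ) * (∏ k : Fin m, (s - ((σz k : ℂ) + (ωz k : ℂ) * Complex.I))) /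
        (∏ i : Fin n, (s - ((σp i : ℂ) + (ωp i : ℂ) * Complex.I))))
    (Θ : ℝ → ℝ)
    (hΘ : ∀ ω : ℝ, Θ ω =
      (∑ k : Fin m, Real.arctan ((ω - ωz k) / (σ0 - σz k)))
        - ∑ i : Fin n, Real.arctan ((ω - ωp i) / (σ0 - σp i)))
    : ∀ ω : ℝ,
      G ((σ0 : ℂ) + (ω : ℂ) * Complex.I) * ((‖G (σ0 : ℂ)‖ : ℝ) : ℂ) *
          Complex.exp (Complex.I * ((Θ 0 : ℝ) : ℂ)) =
        G (σ0 : ℂ) * ((‖G ((σ0 : ℂ) + (ω : ℂ) * Complex.I)‖ : ℝ) : ℂ) *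
          Complex.exp (Complex.I * ((Θ ω : ℝ) : ℂ)) := by
  have hphase : ∀ ω : ℝ, G (σ0 + ω * I) =
      (Real.sign kG * (∏ k, (Real.sign (σ0 - σz k) : ℂ)) / ∏ i, (Real.sign (σ0 - σp i) : ℂ)) *
        ‖G (σ0 + ω * I)‖ * exp (Θ ω * I) := by
    intro ω
    have hzeros := prod_sub_eq_prod_sign_mul_norm_mul_exp univ (fun k => σz k + ωz k * I)
      (fun k _ => by simpa using hz k) ω
    have hpoles := prod_sub_eq_prod_sign_mul_norm_mul_exp univ (fun i => σp i + ωp i * I)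
      (fun i _ => by simpa using hp i) ω
    simp only [add_re, add_im, ofReal_re, ofReal_im, mul_re, mul_im, I_re, I_im, mul_zero,
      mul_one, sub_zero, add_zero, zero_add] at hzeros hpoles
    rw [hG, hΘ]
    exact ofReal_mul_div_eq_mul_norm_mul_exp_sub kG hzeros hpoles
  intro ω
  have h0 := hphase 0
  rw [ofReal_zero, zero_mul, add_zero] at h0
  rw [mul_comm I, mul_comm I]
  linear_combination (‖G σ0‖ * exp (Θ 0 * I) : ℂ) * hphase ω
    - (‖G (σ0 + ω * I)‖ * exp (Θ ω * I) : ℂ) * h0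

theorem stmt_15
    (m n : ℕ) (kG : ℝ) (hkG : kG ≠ 0)
    (σz ωz : Fin m → ℝ) (σp ωp : Fin n → ℝ)
    (σ0 : ℝ) (hσ0 : σ0 < 0)
    (hz : ∀ k, σz k ≠ σ0) (hp : ∀ i, σp i ≠ σ0)
    (G : ℂ → ℂ)
    (hG : ∀ s : ℂ, G s =
      (kG : ℂ) * (∏ k : Fin m, (s - ((σz k : ℂ) + (ωz k : ℂ) * Complex.I))) /
        (∏ i : Fin n, (s - ((σp i : ℂ) + (ωp i : ℂ) * Complex.I))))
    (γz : Fin m → ℝ → ℝ)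
    (hγz : ∀ (k : Fin m) (ω : ℝ), γz k ω = (σ0 - σz k) ^ 2 + (ω - ωz k) ^ 2)
    (γp : Fin n → ℝ → ℝ)
    (hγp : ∀ (i : Fin n) (ω : ℝ), γp i ω = (σ0 - σp i) ^ 2 + (ω - ωp i) ^ 2)
    (H : ℝ → ℝ)
    (hH : ∀ ω : ℝ, H ω = Real.log (‖G ((σ0 : ℂ) + (ω : ℂ) * Complex.I)‖) / σ0)
    (Θ : ℝ → ℝ)
    (hΘ : ∀ ω : ℝ, Θ ω =
      (∑ k : Fin m, Real.arctan ((ω - ωz k) / (σ0 - σz k)))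
        - ∑ i : Fin n, Real.arctan ((ω - ωp i) / (σ0 - σp i)))
    (φ : ℝ → ℝ) (hφ : ∀ ω : ℝ, φ ω = Θ ω - ω * H ω)
    : ∀ ω : ℝ,
      G ((σ0 : ℂ) + (ω : ℂ) * Complex.I) * ((‖G (σ0 : ℂ)‖ : ℝ) : ℂ) *
          Complex.exp (Complex.I * ((Θ 0 : ℝ) : ℂ)) =
        G (σ0 : ℂ) * ((‖G ((σ0 : ℂ) + (ω : ℂ) * Complex.I)‖ : ℝ) : ℂ) *
          Complex.exp (Complex.I * ((Θ ω : ℝ) : ℂ)) :=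
  stmt_15_general m n kG σz ωz σp ωp σ0 hz hp G hG Θ hΘ
end
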